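/- Let |a| > 1 and set z_1 = -a - sqrt(a²-1), z_2 = -a + sqrt(a²-1). Then for all positive integers k_1, k_2, if a > 1, (1/2π) ∫_0^{2π} sin(k_1 x) sin(k_2 x) / (a + cos x) dx = (z_2^{|k_1 - k_2|} - z_2^{k_1+k_2}) / (z_2 - z_1). -/

import Mathlib

open Real

namespace Stmt2Aux

noncomputable def F (a x : ℝ) : ℝ :=
  (x - 2 * Real.arctan (Real.sin x / (a + Real.sqrt (a^2-1) + Real.cos x))) / Real.sqrt (a^2-1)

lemma den_pos {a : ℝ} (ha : 1 < a) (x : ℝ) : 0 < a + Real.cos x := by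
  have := Real.neg_one_le_cos x; linarith

lemma hasDerivAt_F {a : ℝ} (ha : 1 < a) (x : ℝ) :
    HasDerivAt (F a) ((a + Real.cos x)⁻¹) x := by
  unfold F
  set b := Real.sqrt (a^2-1) with hbdef
  have hb2 : b^2 = a^2 - 1 := Real.sq_sqrt (by nlinarith)
  have hb : 0 < b := Real.sqrt_pos.2 (by nlinarith)
  set c := a + b with hcdef
  have hc1 : 1 < c := by nlinarith
  have hden : ∀ y : ℝ, 0 < c + Real.cos y := fun y => by have := Real.neg_one_le_cos y; nlinarith
  have hA : 0 < a + Real.cos x := den_pos ha x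
  have hcx : (c + Real.cos x) ≠ 0 := (hden x).ne'
  have hu : HasDerivAt (fun y => Real.sin y / (c + Real.cos y))
      ((Real.cos x * (c + Real.cos x) - Real.sin x * (-Real.sin x)) / (c + Real.cos x)^2) x := by
    exact ((Real.hasDerivAt_sin x).div ((hasDerivAt_const x c).add (Real.hasDerivAt_cos x)) hcx).congr_deriv (by simp)
  have harc : HasDerivAt (fun y => Real.arctan (Real.sin y / (c + Real.cos y)))
      ((1 + (Real.sin x / (c + Real.cos x))^2)⁻¹ *
        ((Real.cos x * (c + Real.cos x) - Real.sin x * (-Real.sin x)) / (c + Real.cos x)^2)) x := by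
    exact ((Real.hasDerivAt_arctan _).comp x hu).congr_deriv (by rw [one_div])
  have h : HasDerivAt (fun y => (y - 2 * Real.arctan (Real.sin y / (c + Real.cos y))) / b)
      ((1 - 2 * ((1 + (Real.sin x / (c + Real.cos x))^2)⁻¹ *
        ((Real.cos x * (c + Real.cos x) - Real.sin x * (-Real.sin x)) / (c + Real.cos x)^2))) / b) x :=
    ((hasDerivAt_id x).sub (harc.const_mul 2)).div_const b
  convert h using 1
  have hs : Real.sin x ^ 2 = 1 - Real.cos x ^ 2 := by
    have := Real.sin_sq_add_cos_sq x; nlinarith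
  have h1 : 1 + (Real.sin x / (c + Real.cos x))^2 = 2*c*(a + Real.cos x)/(c+Real.cos x)^2 := by
    field_simp
    linear_combination hs + hb2 + (c - a + b) * hcdef
  rw [h1, show Real.sin x * -Real.sin x = Real.cos x ^ 2 - 1 from by
    nlinarith [Real.sin_sq_add_cos_sq x]]
  have hkey : c * b = c * a - 1 := by linear_combination hb2 + b * hcdef
  field_simp
  linear_combination hkey

lemma intble {a : ℝ} (ha : 1 < a) {f : ℝ → ℝ} (hf : Continuous f) :
    IntervalIntegrable (fun x => f x / (a + Real.cos x)) MeasureTheory.volume 0 (2*π) :=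
  (hf.div (continuous_const.add Real.continuous_cos) fun x => (den_pos ha x).ne').intervalIntegrable _ _

lemma I0 {a : ℝ} (ha : 1 < a) :
    ∫ x in (0:ℝ)..(2*π), (a + Real.cos x)⁻¹ = 2*π / Real.sqrt (a^2-1) := by
  have hb : 0 < Real.sqrt (a^2-1) := Real.sqrt_pos.2 (by nlinarith)
  have h := intervalIntegral.integral_eq_sub_of_hasDerivAt
    (f := F a) (f' := fun x => (a + Real.cos x)⁻¹)
    (fun x _ => hasDerivAt_F ha x)
    (by simpa [div_eq_mul_inv] using intble ha (continuous_const (y := (1:ℝ))))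
  rw [h]
  unfold F
  rw [Real.sin_two_pi, Real.sin_zero]
  simp

lemma cos_int_zero (n : ℕ) (hn : 0 < n) :
    ∫ x in (0:ℝ)..(2*π), Real.cos (n*x) = 0 := by
  have hn' : (n:ℝ) ≠ 0 := Nat.cast_ne_zero.2 hn.ne'
  have := intervalIntegral.integral_comp_mul_left (a := (0:ℝ)) (b := 2*π)
    (fun x => Real.cos x) hn'
  rw [this, integral_cos]
  have : (n:ℝ) * (2*π) = (2*n : ℕ) * π := by push_cast; ring
  rw [this, Real.sin_nat_mul_pi]
  simp

lemma In {a : ℝ} (ha : 1 < a) (n : ℕ) :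
    ∫ x in (0:ℝ)..(2*π), Real.cos (n*x) / (a + Real.cos x)
      = 2*π * (-a + Real.sqrt (a^2-1))^n / Real.sqrt (a^2-1) := by
  set b := Real.sqrt (a^2-1) with hbdef
  have hb2 : b^2 = a^2 - 1 := Real.sq_sqrt (by nlinarith)
  have hb : 0 < b := Real.sqrt_pos.2 (by nlinarith)
  set z := -a + b with hzdef
  set I : ℕ → ℝ := fun n => ∫ x in (0:ℝ)..(2*π), Real.cos (n*x) / (a + Real.cos x) with hI
  have hint : ∀ m : ℕ, IntervalIntegrable (fun x => Real.cos (m*x) / (a + Real.cos x))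
      MeasureTheory.volume 0 (2*π) := fun m =>
    intble ha (Real.continuous_cos.comp (continuous_const.mul continuous_id))
  have base0 : I 0 = 2*π*z^0/b := by
    show (∫ x in (0:ℝ)..(2*π), Real.cos ((0:ℕ)*x) / (a + Real.cos x)) = _
    simp only [Nat.cast_zero, zero_mul, Real.cos_zero]
    simp only [one_div, pow_zero, mul_one]
    exact I0 ha
  have base1 : I 1 = 2*π*z^1/b := by
    show (∫ x in (0:ℝ)..(2*π), Real.cos ((1:ℕ)*x) / (a + Real.cos x)) = _
    have hptw : ∀ x : ℝ, Real.cos ((1:ℕ)*x) / (a + Real.cos x)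
        = 1 - a * (a + Real.cos x)⁻¹ := by
      intro x
      have h := (den_pos ha x).ne'
      rw [Nat.cast_one, one_mul]
      field_simp
      ring
    rw [intervalIntegral.integral_congr (g := fun x => 1 - a * (a + Real.cos x)⁻¹)
      (fun x _ => hptw x)]
    rw [intervalIntegral.integral_sub intervalIntegrable_const
      ((by simpa [div_eq_mul_inv] using intble ha (continuous_const (y := (1:ℝ)))
        : IntervalIntegrable (fun x => (a + Real.cos x)⁻¹) MeasureTheory.volume 0 (2*π)).const_mul a)]
    rw [intervalIntegral.integral_const_mul, I0 ha]
    simp only [intervalIntegral.integral_const, smul_eq_mul, mul_one]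
    rw [hzdef]
    rw [← hbdef]
    field_simp
    ring
  have step : ∀ n : ℕ, I n = 2*π*z^n/b → I (n+1) = 2*π*z^(n+1)/b → I (n+2) = 2*π*z^(n+2)/b := by
    intro n h1 h2
    have hptw : ∀ x : ℝ, Real.cos ((n+2:ℕ)*x) / (a + Real.cos x)
        = 2 * Real.cos ((n+1:ℕ)*x)
          - 2*a * (Real.cos ((n+1:ℕ)*x) / (a + Real.cos x))
          - Real.cos ((n:ℕ)*x) / (a + Real.cos x) := by
      intro x
      have h := (den_pos ha x).ne'
      have htrig : Real.cos ((n+2:ℕ)*x) + Real.cos ((n:ℕ)*x)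
          = 2 * Real.cos ((n+1:ℕ)*x) * Real.cos x := by
        have := Real.cos_add_cos ((n+2:ℕ)*x) ((n:ℕ)*x)
        rw [this]
        push_cast
        ring_nf
      field_simp
      push_cast at htrig ⊢
      ring_nf at htrig ⊢
      linear_combination htrig
    have hc1 : IntervalIntegrable (fun x => 2 * Real.cos ((n+1:ℕ)*x))
        MeasureTheory.volume 0 (2*π) :=
      (continuous_const.mul (Real.continuous_cos.comp
        (continuous_const.mul continuous_id))).intervalIntegrable _ _
    have : I (n+2) = (∫ x in (0:ℝ)..(2*π), (2 * Real.cos ((n+1:ℕ)*x)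
          - 2*a * (Real.cos ((n+1:ℕ)*x) / (a + Real.cos x))
          - Real.cos ((n:ℕ)*x) / (a + Real.cos x))) :=
      intervalIntegral.integral_congr (fun x _ => hptw x)
    rw [this]
    rw [intervalIntegral.integral_sub (hc1.sub ((hint (n+1)).const_mul (2*a))) (hint n)]
    rw [intervalIntegral.integral_sub hc1 ((hint (n+1)).const_mul (2*a))]
    rw [intervalIntegral.integral_const_mul, intervalIntegral.integral_const_mul,
      cos_int_zero (n+1) (Nat.succ_pos n)]
    show 2 * 0 - 2*a * I (n+1) - I n = _
    rw [h1, h2]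
    have hz : z^2 = -(2*a)*z - 1 := by
      rw [hzdef]; nlinarith [hb2]
    have : z^(n+2) = -(2*a)*z^(n+1) - z^n := by
      calc z^(n+2) = z^2 * z^n := by ring
      _ = (-(2*a)*z - 1) * z^n := by rw [hz]
      _ = -(2*a)*z^(n+1) - z^n := by ring
    rw [this]
    field_simp
    ring
  have main : ∀ n : ℕ, I n = 2*π*z^n/b ∧ I (n+1) = 2*π*z^(n+1)/b := by
    intro n
    induction n with
    | zero => exact ⟨base0, base1⟩
    | succ m ih => exact ⟨ih.2, step m ih.1 ih.2⟩
  exact (main n).1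

lemma helper {a : ℝ} (ha : 1 < a) (k₁ k₂ : ℕ) (hle : k₂ ≤ k₁) :
    (1 / (2 * π)) * ∫ x in (0:ℝ)..(2 * π),
        Real.sin (k₁ * x) * Real.sin (k₂ * x) / (a + Real.cos x)
      = ((-a + Real.sqrt (a ^ 2 - 1)) ^ (Nat.dist k₁ k₂)
          - (-a + Real.sqrt (a ^ 2 - 1)) ^ (k₁ + k₂))
        / ((-a + Real.sqrt (a ^ 2 - 1)) - (-a - Real.sqrt (a ^ 2 - 1))) := by
  set b := Real.sqrt (a^2-1) with hbdef
  have hb : 0 < b := Real.sqrt_pos.2 (by nlinarith)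
  set d := Nat.dist k₁ k₂ with hddef
  set s := k₁ + k₂ with hsdef
  have hd : (d:ℝ) = (k₁:ℝ) - k₂ := by
    rw [hddef, Nat.dist_eq_sub_of_le_right hle]
    push_cast [hle]
    ring
  have hptw : ∀ x : ℝ, Real.sin (k₁ * x) * Real.sin (k₂ * x) / (a + Real.cos x)
      = (Real.cos ((d:ℕ)*x) / (a + Real.cos x)) / 2
        - (Real.cos ((s:ℕ)*x) / (a + Real.cos x)) / 2 := by
    intro x
    have h := (den_pos ha x).ne'
    have hc : Real.cos ((d:ℕ)*x) - Real.cos ((s:ℕ)*x)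
        = 2 * (Real.sin (k₁*x) * Real.sin (k₂*x)) := by
      rw [hd, show ((s:ℕ):ℝ) = (k₁:ℝ) + k₂ by rw [hsdef]; push_cast; ring]
      rw [show ((k₁:ℝ) - k₂)*x = k₁*x - k₂*x by ring,
          show ((k₁:ℝ) + k₂)*x = k₁*x + k₂*x by ring,
          Real.cos_sub, Real.cos_add]
      ring
    field_simp
    ring_nf at hc ⊢
    linear_combination (-1) * hc
  have hint : ∀ m : ℕ, IntervalIntegrable (fun x => Real.cos (m*x) / (a + Real.cos x))
      MeasureTheory.volume 0 (2*π) := fun m =>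
    intble ha (Real.continuous_cos.comp (continuous_const.mul continuous_id))
  rw [intervalIntegral.integral_congr (fun x _ => hptw x)]
  rw [intervalIntegral.integral_sub ((hint d).div_const 2) ((hint s).div_const 2)]
  rw [intervalIntegral.integral_div, intervalIntegral.integral_div, In ha, In ha]
  have hπ : π ≠ 0 := Real.pi_ne_zero
  rw [show (-a + Real.sqrt (a ^ 2 - 1)) - (-a - Real.sqrt (a ^ 2 - 1)) = 2*b by rw [hbdef]; ring]
  rw [show Real.sqrt (a^2-1) = b from hbdef.symm]
  field_simp

end Stmt2Aux

/-- For `a > 1`, with `z₁ = -a - √(a²-1)` and `z₂ = -a + √(a²-1)`,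
`(1/2π) ∫_0^{2π} sin(k₁x) sin(k₂x)/(a + cos x) dx = (z₂^{|k₁-k₂|} - z₂^{k₁+k₂})/(z₂ - z₁)`. -/
theorem stmt_2 (a : ℝ) (ha : 1 < a) (k₁ k₂ : ℕ) (hk₁ : 0 < k₁) (hk₂ : 0 < k₂) :
    (1 / (2 * π)) * ∫ x in (0:ℝ)..(2 * π),
        Real.sin (k₁ * x) * Real.sin (k₂ * x) / (a + Real.cos x)
      = ((-a + Real.sqrt (a ^ 2 - 1)) ^ (Nat.dist k₁ k₂)
          - (-a + Real.sqrt (a ^ 2 - 1)) ^ (k₁ + k₂))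
        / ((-a + Real.sqrt (a ^ 2 - 1)) - (-a - Real.sqrt (a ^ 2 - 1))) := by
  rcases le_total k₂ k₁ with h | h
  · exact Stmt2Aux.helper ha k₁ k₂ h
  · have := Stmt2Aux.helper ha k₂ k₁ h
    simpa [mul_comm, Nat.dist_comm, Nat.add_comm] using this
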